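/- arXiv:2402.15455 — 8 statements merged into one kernel-verified Lean document; each statement's English description precedes it below -/
import Mathlib

section
/- If S is a good subring of a UQ ring R, then S is also a UQ ring. -/
/-!
A unit `u` of `S` stays a unit in `R`, so `u = 1 + q` with `q` quasinilpotent in `R`; this `q` is
`u - 1 ∈ S`, and it is quasinilpotent in `S` because the units `1 - qx` it produces in `R` are
units of `S` by goodness. The converse inclusion `1 + QN(S) ⊆ U(S)` holds in every ring.
-/

/-- An element `a` of a ring is quasinilpotent if `1 - a*x` is a unit
for every `x` commuting with `a`. -/
def IsQuasinilpotent {R : Type*} [Ring R] (a : R) : Prop :=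
  ∀ x : R, x * a = a * x → IsUnit (1 - a * x)

/-- A ring `R` is a UQ ring if `U(R) = 1 + QN(R)`. -/
def IsUQRing (R : Type*) [Ring R] : Prop :=
  ∀ u : R, IsUnit u ↔ ∃ q : R, IsQuasinilpotent q ∧ u = 1 + q

theorem IsQuasinilpotent.isUnit_one_add {R : Type*} [Ring R] {q : R}
    (hq : IsQuasinilpotent q) : IsUnit (1 + q) := by
  simpa [sub_eq_add_neg] using hq (-1) (by simp)

theorem IsQuasinilpotent.of_map {S R : Type*} [Ring S] [Ring R] (f : S →+* R) [IsLocalHom f]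
    {a : S} (ha : IsQuasinilpotent (f a)) : IsQuasinilpotent a := by
  intro x hx
  apply isUnit_of_map_unit f
  simpa using ha (f x) (by rw [← map_mul, hx, map_mul])

theorem IsUQRing.of_isLocalHom {S R : Type*} [Ring S] [Ring R] (f : S →+* R) [IsLocalHom f]
    (hR : IsUQRing R) : IsUQRing S := by
  intro u
  refine ⟨fun hu => ⟨u - 1, ?_, by abel⟩, fun ⟨q, hq, hu⟩ => hu ▸ hq.isUnit_one_add⟩
  obtain ⟨q, hq, hfu⟩ := (hR (f u)).mp (hu.map f)
  exact IsQuasinilpotent.of_map f (by rwa [map_sub, map_one, hfu, add_sub_cancel_left])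

theorem good_subring_uq {R : Type*} [Ring R] (S : Subring R)
    (hgood : ∀ s : S, IsUnit (s : R) ↔ IsUnit s)
    (hR : IsUQRing R) : IsUQRing S :=
  have : IsLocalHom S.subtype := ⟨fun s => (hgood s).mp⟩
  hR.of_isLocalHom S.subtype
end

section
/- A direct product ∏_{i∈I} R_i of rings is a UQ ring if and only if each R_i is a UQ ring. -/
/-! Being a unit and being quasinilpotent are both coordinatewise conditions in `∏ Rᵢ`, and both
hold for the coordinates of `1` (resp. of `1 - 1 = 0`). So `u ↦ (IsUnit u ↔ IsQuasinilpotent (u - 1))`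
holds on the product iff it holds in every factor: to test a factor, extend an element by `1`. -/

theorem forall_pi_iff_iff {I : Type*} {α : I → Type*} {P Q : ∀ i, α i → Prop} (a : ∀ i, α i)
    (hP : ∀ i, P i (a i)) (hQ : ∀ i, Q i (a i)) :
    (∀ f : ∀ i, α i, (∀ i, P i (f i)) ↔ ∀ i, Q i (f i)) ↔ ∀ i x, P i x ↔ Q i x := by
  classical
  refine ⟨fun h i x => ?_, fun h f => forall_congr' fun i => h i (f i)⟩
  simpa [Function.forall_update_iff, hP, hQ] using h (Function.update a i x)

section

variable {R : Type*} [Ring R]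

theorem isQuasinilpotent_zero : IsQuasinilpotent (0 : R) := by
  intro x _
  simp

theorem exists_isQuasinilpotent_eq_one_add_iff (u : R) :
    (∃ q : R, IsQuasinilpotent q ∧ u = 1 + q) ↔ IsQuasinilpotent (u - 1) := by
  constructor
  · rintro ⟨q, hq, rfl⟩
    simpa using hq
  · exact fun h => ⟨u - 1, h, by abel⟩

theorem isUQRing_iff : IsUQRing R ↔ ∀ u : R, IsUnit u ↔ IsQuasinilpotent (u - 1) := by
  simp only [IsUQRing, exists_isQuasinilpotent_eq_one_add_iff]

end

theorem Pi.isQuasinilpotent_iff {I : Type*} {R : I → Type*} [∀ i, Ring (R i)] (a : ∀ i, R i) :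
    IsQuasinilpotent a ↔ ∀ i, IsQuasinilpotent (a i) := by
  classical
  constructor
  · intro h i x hx
    have hcomm : Pi.single i x * a = a * Pi.single i x := by
      ext j
      rcases eq_or_ne j i with rfl | hj
      · simpa using hx
      · simp [hj]
    simpa using Pi.isUnit_iff.mp (h _ hcomm) i
  · exact fun h x hx => Pi.isUnit_iff.mpr fun i => h i (x i) (congrFun hx i)

theorem uq_pi {I : Type*} (R : I → Type*) [∀ i, Ring (R i)] :
    IsUQRing (∀ i, R i) ↔ ∀ i, IsUQRing (R i) := by
  simp only [isUQRing_iff, Pi.isUnit_iff, Pi.isQuasinilpotent_iff, Pi.sub_apply, Pi.one_apply]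
  exact forall_pi_iff_iff (P := fun _ => IsUnit) (Q := fun _ x => IsQuasinilpotent (x - 1)) 1
    (fun _ => isUnit_one) fun _ => by simpa using isQuasinilpotent_zero
end

section
/- If R is a UQ ring and e is an idempotent of R, then the corner ring eRe (with identity e) is a UQ ring. -/
/-!
A unit `u` of `eRe` lifts to the unit `u + (1 - e)` of `R`, and conversely a unit of `R`
commuting with `e` cuts down to the unit `c * e` of `eRe`. So if `R` is UQ, then
`u + (1 - e) - 1 = u - e` is quasinilpotent in `R`; for `x ∈ eRe` commuting with `u - e`,
the unit `1 - (u - e) x` of `R` is the lift of `e - (u - e) x`, which is therefore a unit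
of `eRe`. The converse inclusion `e + QN(eRe) ⊆ U(eRe)` holds in any ring (take `x = -e`).
-/

section Corner

variable {R : Type*} [Ring R] {e : R}

def IsCornerUnit (e u : R) : Prop :=
  ∃ v : R, v = e * v * e ∧ u * v = e ∧ v * u = e

def IsCornerQuasinilpotent (e q : R) : Prop :=
  ∀ x : R, x = e * x * e → x * q = q * x → IsCornerUnit e (e - q * x)

theorem IsUQRing.isQuasinilpotent_sub_one (hR : IsUQRing R) {u : R} (hu : IsUnit u) :
    IsQuasinilpotent (u - 1) := by
  obtain ⟨q, hq, rfl⟩ := (hR u).mp hu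
  simpa using hq

namespace IsIdempotentElem

variable (he : IsIdempotentElem e)
include he

theorem mem_corner_iff_eq {a : R} : a ∈ NonUnitalRing.corner e ↔ a = e * a * e := by
  refine ⟨fun ha => ?_, fun ha => ⟨a, ha.symm⟩⟩
  obtain ⟨hea, hae⟩ := (Subsemigroup.mem_corner_iff he).mp ha
  rw [hea, hae]

theorem self_mem_corner : e ∈ NonUnitalRing.corner e :=
  (he.mem_corner_iff_eq).mpr (by rw [he.eq, he.eq])

theorem isCornerUnit_mul_of_commute {c : R} (hc : IsUnit c) (hec : Commute e c) :
    IsCornerUnit e (c * e) := by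
  obtain ⟨c, rfl⟩ := hc
  have hec' : e * ↑c⁻¹ = ↑c⁻¹ * e := hec.units_inv_right
  refine ⟨↑c⁻¹ * e, ?_, ?_, ?_⟩
  · rw [← mul_assoc, hec', mul_assoc, he.eq, mul_assoc, he.eq]
  · rw [mul_assoc, ← mul_assoc e, hec', mul_assoc, ← mul_assoc (c : R), Units.mul_inv, one_mul,
      he.eq]
  · rw [mul_assoc, ← mul_assoc e, hec.eq, mul_assoc, ← mul_assoc (↑c⁻¹ : R), Units.inv_mul,
      one_mul, he.eq]

theorem add_one_sub_mul_add_one_sub {a b : R} (ha : a ∈ NonUnitalRing.corner e)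
    (hb : b ∈ NonUnitalRing.corner e) (hab : a * b = e) :
    (a + (1 - e)) * (b + (1 - e)) = 1 := by
  obtain ⟨-, hae⟩ := (Subsemigroup.mem_corner_iff he).mp ha
  obtain ⟨heb, -⟩ := (Subsemigroup.mem_corner_iff he).mp hb
  simp only [mul_add, add_mul, mul_sub, sub_mul, mul_one, one_mul, hab, hae, heb, he.eq]
  abel

theorem isUnit_add_one_sub_of_isCornerUnit {a : R} (ha : a ∈ NonUnitalRing.corner e)
    (hunit : IsCornerUnit e a) : IsUnit (a + (1 - e)) := by
  obtain ⟨b, hb, hab, hba⟩ := hunit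
  have hb' := (he.mem_corner_iff_eq).mpr hb
  exact isUnit_iff_exists.mpr ⟨b + (1 - e), he.add_one_sub_mul_add_one_sub ha hb' hab,
    he.add_one_sub_mul_add_one_sub hb' ha hba⟩

theorem isCornerUnit_iff_isUnit_add_one_sub {a : R} (ha : a ∈ NonUnitalRing.corner e) :
    IsCornerUnit e a ↔ IsUnit (a + (1 - e)) := by
  refine ⟨he.isUnit_add_one_sub_of_isCornerUnit ha, fun hunit => ?_⟩
  obtain ⟨hea, hae⟩ := (Subsemigroup.mem_corner_iff he).mp ha
  have hcut : (a + (1 - e)) * e = a := by simp only [add_mul, sub_mul, one_mul, hae, he.eq]; abel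
  have hcomm : Commute e (a + (1 - e)) := by
    simp only [Commute, SemiconjBy, mul_add, add_mul, mul_sub, sub_mul, mul_one, one_mul, hea, hae]
  simpa only [hcut] using he.isCornerUnit_mul_of_commute hunit hcomm

end IsIdempotentElem

theorem IsQuasinilpotent.isCornerQuasinilpotent (he : IsIdempotentElem e) {q : R}
    (hqc : q ∈ NonUnitalRing.corner e) (hq : IsQuasinilpotent q) : IsCornerQuasinilpotent e q := by
  intro x hx hxq
  have hxc := he.mem_corner_iff_eq.mpr hx
  rw [he.isCornerUnit_iff_isUnit_add_one_sub (sub_mem he.self_mem_corner (mul_mem hqc hxc)),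
    show e - q * x + (1 - e) = 1 - q * x by abel]
  exact hq x hxq

theorem IsCornerQuasinilpotent.isCornerUnit_add (he : IsIdempotentElem e) {q : R}
    (hqc : q ∈ NonUnitalRing.corner e) (hq : IsCornerQuasinilpotent e q) :
    IsCornerUnit e (e + q) := by
  obtain ⟨heq, hqe⟩ := (Subsemigroup.mem_corner_iff he).mp hqc
  have hunit := hq (-e) (by rw [mul_neg, neg_mul, he.eq, he.eq])
    (by rw [neg_mul, mul_neg, heq, hqe])
  rwa [mul_neg, hqe, sub_neg_eq_add] at hunit

end Corner

/-- If `R` is a UQ ring and `e` an idempotent, then the corner ring `eRe`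
(with identity `e`) is a UQ ring: an element `u ∈ eRe` is a unit of `eRe`
iff `u = e + q` for some quasinilpotent `q` of `eRe`. -/
theorem corner_uq {R : Type*} [Ring R] (hR : IsUQRing R)
    (e : R) (he : IsIdempotentElem e) :
    ∀ u : R, u = e * u * e →
      ((∃ v : R, v = e * v * e ∧ u * v = e ∧ v * u = e) ↔
        ∃ q : R, q = e * q * e ∧
          (∀ x : R, x = e * x * e → x * q = q * x →
            ∃ w : R, w = e * w * e ∧ (e - q * x) * w = e ∧ w * (e - q * x) = e) ∧
          u = e + q) := by
  intro u hu
  have huc := he.mem_corner_iff_eq.mpr hu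
  constructor
  · intro hunit
    have hqn := hR.isQuasinilpotent_sub_one ((he.isCornerUnit_iff_isUnit_add_one_sub huc).mp hunit)
    rw [show u + (1 - e) - 1 = u - e by abel] at hqn
    have hqc := sub_mem huc he.self_mem_corner
    exact ⟨u - e, he.mem_corner_iff_eq.mp hqc, hqn.isCornerQuasinilpotent he hqc, by abel⟩
  · rintro ⟨q, hq, hqn, rfl⟩
    exact IsCornerQuasinilpotent.isCornerUnit_add he (he.mem_corner_iff_eq.mpr hq) hqn
end

section
/- A ring R is reduced if and only if QN(R[x]) = {0}. -/
/-!
A nilpotent `a ∈ R` gives the nilpotent, hence quasinilpotent, constant `C a`, so `QN(R[X]) = {0}`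
forces `R` to be reduced. Conversely, if `R` is reduced and `p` is quasinilpotent, then `1 - p X` is a
unit of `R[X]`. Reduced rings are reversible (`ab = 0 → ba = 0`), which is enough to run McCoy's
argument: if `f g = 1` and `deg f > 0`, the leading coefficient `a` of `f` kills every coefficient of
`g` (by downward induction), so `a = a · (g f) = 0`, absurd. Hence units of `R[X]` are constants and
`1 - p X` can only be one if `p = 0`.
-/

open Polynomial

theorem IsQuasinilpotent.zero {R : Type*} [Ring R] : IsQuasinilpotent (0 : R) :=
  fun _ _ => by simp

theorem IsNilpotent.isQuasinilpotent {R : Type*} [Ring R] {a : R} (ha : IsNilpotent a) :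
    IsQuasinilpotent a :=
  fun _ hx => (Commute.isNilpotent_mul_right hx.symm ha).isUnit_one_sub

namespace IsReduced

variable {R : Type*} [Ring R] [IsReduced R] {a b : R}

theorem mul_eq_zero_symm (h : a * b = 0) : b * a = 0 :=
  IsNilpotent.eq_zero ⟨2, by rw [sq, mul_assoc, ← mul_assoc a, h, zero_mul, mul_zero]⟩

theorem mul_mul_eq_zero (h : a * b = 0) (r : R) : a * r * b = 0 :=
  IsNilpotent.eq_zero ⟨2, by
    rw [show (a * r * b) ^ 2 = a * r * (b * a) * (r * b) by noncomm_ring, mul_eq_zero_symm h,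
      mul_zero, zero_mul]⟩

theorem mul_eq_zero_of_mul_mul_eq_zero (h : a * (a * b) = 0) : a * b = 0 :=
  IsNilpotent.eq_zero ⟨2, by rw [sq, ← mul_assoc, mul_eq_zero_symm h, zero_mul]⟩

end IsReduced

namespace Polynomial

variable {R : Type*} [Ring R] [IsReduced R] {f g : R[X]}

theorem leadingCoeff_mul_coeff_eq_zero_of_forall_lt (hfg : f * g = 1) (hf : f.natDegree ≠ 0)
    {j : ℕ} (h : ∀ l, j < l → f.leadingCoeff * g.coeff l = 0) :
    f.leadingCoeff * g.coeff j = 0 := by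
  set n := f.natDegree
  set a := f.leadingCoeff
  have hcoeff : a * (f * g).coeff (n + j) = 0 := by
    rw [hfg, coeff_one, if_neg (by omega), mul_zero]
  rw [coeff_mul, Finset.mul_sum, Finset.sum_eq_single_of_mem (n, j) (by simp)] at hcoeff
  · exact IsReduced.mul_eq_zero_of_mul_mul_eq_zero hcoeff
  rintro ⟨i, l⟩ hil hne
  rw [Finset.HasAntidiagonal.mem_antidiagonal] at hil
  rcases lt_or_gt_of_ne (show i ≠ n by rintro rfl; exact hne (by simp_all)) with hi | hi
  · rw [← mul_assoc]
    exact IsReduced.mul_mul_eq_zero (h l (by simp only at hil; omega)) _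
  · rw [coeff_eq_zero_of_natDegree_lt hi, zero_mul, mul_zero]

theorem C_leadingCoeff_mul_eq_zero_of_mul_eq_one (hfg : f * g = 1) (hf : f.natDegree ≠ 0) :
    C f.leadingCoeff * g = 0 := by
  have hdown : ∀ k j, g.natDegree < j + k → f.leadingCoeff * g.coeff j = 0 := by
    intro k
    induction k with
    | zero => intro j hj; rw [coeff_eq_zero_of_natDegree_lt (by omega), mul_zero]
    | succ k ih =>
      exact fun j hj => leadingCoeff_mul_coeff_eq_zero_of_forall_lt hfg hf
        fun l hl => ih l (by omega)
  ext j
  rw [coeff_C_mul, coeff_zero]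
  exact hdown (g.natDegree + 1) j (by omega)

theorem natDegree_eq_zero_of_isUnit_of_isReduced (hf : IsUnit f) : f.natDegree = 0 := by
  obtain ⟨u, rfl⟩ := hf
  by_contra hdeg
  have hlead : C (u : R[X]).leadingCoeff = 0 := by
    rw [← mul_one (C _), ← u.inv_mul, ← mul_assoc,
      C_leadingCoeff_mul_eq_zero_of_mul_eq_one u.mul_inv hdeg, zero_mul]
  rw [C_eq_zero, leadingCoeff_eq_zero] at hlead
  exact hdeg (by rw [hlead, natDegree_zero])

theorem eq_zero_of_isUnit_one_sub_mul_X {p : R[X]} (hp : IsUnit (1 - p * X)) : p = 0 := by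
  rcases subsingleton_or_nontrivial R with _ | _
  · exact Subsingleton.elim p 0
  by_contra hp0
  have hpX : (p * X).natDegree = p.natDegree + 1 := natDegree_mul_X hp0
  have hdeg := natDegree_eq_zero_of_isUnit_of_isReduced hp
  rw [natDegree_sub_eq_right_of_natDegree_lt (by rw [natDegree_one, hpX]; omega), hpX] at hdeg
  omega

end Polynomial

theorem reduced_iff_qn_polynomial_zero (R : Type*) [Ring R] :
    IsReduced R ↔ {p : Polynomial R | IsQuasinilpotent p} = {0} := by
  constructor
  · intro _
    ext p
    exact ⟨fun hp => eq_zero_of_isUnit_one_sub_mul_X (hp X X_mul), fun hp => hp ▸ .zero⟩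
  · intro h
    refine ⟨fun a ha => C_eq_zero.mp ?_⟩
    have hC : C a ∈ {p : R[X] | IsQuasinilpotent p} := (ha.map C).isQuasinilpotent
    rwa [h] at hC
end

section
/- Let R be a ring, a ∈ QN(R), and b ∈ Z(R) a central element. Then ab ∈ QN(R). -/
theorem commute_mul_iff_commute_mul_of_mem_center {M : Type*} [Semigroup M] {a b x : M}
    (hb : b ∈ Set.center M) : Commute (a * b) x ↔ Commute a (b * x) := by
  have hbxa : b * x * a = x * (a * b) := by
    rw [(hb.comm x).eq, mul_assoc, (hb.comm a).eq]
  rw [commute_iff_eq, commute_iff_eq, hbxa, mul_assoc]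

theorem qn_mul_central {R : Type*} [Ring R] (a b : R)
    (ha : IsQuasinilpotent a) (hb : b ∈ Set.center R) :
    IsQuasinilpotent (a * b) := by
  intro x hx
  have hbx : Commute a (b * x) :=
    (commute_mul_iff_commute_mul_of_mem_center hb).mp (Commute.symm hx)
  simpa only [mul_assoc] using ha (b * x) hbx.symm.eq
end

section
/- Let R be a ring, a ∈ QN(R), and b ∈ QN(R) ∩ Z(R). Then a + b ∈ QN(R). -/
/-! The unit `1 - b x` commutes with `a`, and factoring it out gives
`1 - (a + b) x = (1 - b x) (1 - a (1 - b x)⁻¹ x)`, where `(1 - b x)⁻¹ x` again commutes with `a`. -/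

theorem Commute.units_sub_mul_eq_mul_one_sub {R : Type*} [Ring R] {a : R} {u : Rˣ}
    (hau : Commute a u) (x : R) : u - a * x = u * (1 - a * (↑u⁻¹ * x)) := by
  rw [mul_sub, mul_one, ← mul_assoc, ← hau.eq, mul_assoc, Units.mul_inv_cancel_left]

theorem IsQuasinilpotent.isUnit_units_sub_mul {R : Type*} [Ring R] {a x : R} {u : Rˣ}
    (ha : IsQuasinilpotent a) (hau : Commute a u) (hxa : Commute x a) :
    IsUnit (u - a * x) := by
  rw [hau.units_sub_mul_eq_mul_one_sub]
  exact u.isUnit.mul (ha _ (hau.units_inv_right.symm.mul_left hxa))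

theorem qn_add_central_qn {R : Type*} [Ring R] (a b : R)
    (ha : IsQuasinilpotent a) (hb : IsQuasinilpotent b)
    (hbz : b ∈ Set.center R) : IsQuasinilpotent (a + b) := by
  intro x hx
  have hbc : ∀ y, Commute b y := (Set.mem_center_iff.mp hbz).comm
  have hxa : Commute x a := by simpa using Commute.sub_right hx (hbc x).symm
  obtain ⟨u, hu⟩ := hb x (hbc x).symm
  have hau : Commute a u :=
    hu ▸ (Commute.one_right a).sub_right ((hbc a).symm.mul_right hxa.symm)
  have hsplit : 1 - (a + b) * x = u - a * x := by rw [hu, add_mul]; abel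
  rw [hsplit]
  exact ha.isUnit_units_sub_mul hau hxa
end

section
/- For any nonzero ring S and any integer n ≥ 2, the full matrix ring M_n(S) is not a UQ ring. -/
/-!
If `1 + q` is a unit in a UQ ring, then `q` is quasinilpotent, so `1 - q x` is a unit for every
`x` commuting with `q`. But `1 - e` is never a unit for a nonzero idempotent `e`. In `M_n(S)`
the block `q = [[0, 1], [1, 1]]` on two coordinates breaks this: `1 + q = [[1, 1], [1, 2]]` has
inverse `[[2, -1], [-1, 1]]`, and `x = [[-1, 1], [1, 0]]` is the inverse of `q` on that block,
so `q x` is the idempotent projecting onto the two coordinates.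
-/

theorem IsUQRing.isQuasinilpotent_of_isUnit_one_add {R : Type*} [Ring R] (hR : IsUQRing R)
    {q : R} (hq : IsUnit (1 + q)) : IsQuasinilpotent q := by
  obtain ⟨q', hq', hqq'⟩ := (hR _).mp hq
  rwa [add_right_injective 1 hqq']

theorem IsIdempotentElem.eq_zero_of_isUnit_one_sub {R : Type*} [Ring R] {e : R}
    (he : IsIdempotentElem e) (hu : IsUnit (1 - e)) : e = 0 := by
  simpa using (IsIdempotentElem.iff_eq_one_of_isUnit hu).mp he.one_sub

theorem not_isUQRing_of_isIdempotentElem_mul {R : Type*} [Ring R] {q x : R}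
    (hq : IsUnit (1 + q)) (hxq : x * q = q * x) (he : IsIdempotentElem (q * x))
    (he0 : q * x ≠ 0) : ¬ IsUQRing R :=
  fun hR ↦ he0 <| he.eq_zero_of_isUnit_one_sub <|
    hR.isQuasinilpotent_of_isUnit_one_add hq x hxq

namespace Matrix

theorem not_isUQRing_of_ne {ι S : Type*} [Fintype ι] [DecidableEq ι] [Ring S] [Nontrivial S]
    {i j : ι} (hij : i ≠ j) : ¬ IsUQRing (Matrix ι ι S) := by
  set q : Matrix ι ι S := single i j 1 + single j i 1 + single j j 1
  set x : Matrix ι ι S := single i j 1 + single j i 1 - single i i 1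
  set v : Matrix ι ι S := 1 + single i i 1 - single i j 1 - single j i 1
  have hji : j ≠ i := hij.symm
  have hqx : q * x = single i i 1 + single j j 1 := by
    simp only [q, x, add_mul, mul_add, mul_sub, single_mul_single_same,
      single_mul_single_of_ne, ne_eq, hij, hji, not_false_eq_true, mul_one]
    abel
  have hxq : x * q = single i i 1 + single j j 1 := by
    simp only [q, x, add_mul, sub_mul, mul_add, single_mul_single_same,
      single_mul_single_of_ne, ne_eq, hij, hji, not_false_eq_true, mul_one]
    abel
  have hqv : (1 + q) * v = 1 := by
    simp only [q, v, add_mul, mul_add, mul_sub, one_mul, mul_one, single_mul_single_same,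
      single_mul_single_of_ne, ne_eq, hij, hji, not_false_eq_true]
    abel
  have hvq : v * (1 + q) = 1 := by
    simp only [q, v, add_mul, sub_mul, mul_add, one_mul, mul_one, single_mul_single_same,
      single_mul_single_of_ne, ne_eq, hij, hji, not_false_eq_true]
    abel
  refine not_isUQRing_of_isIdempotentElem_mul ⟨⟨1 + q, v, hqv, hvq⟩, rfl⟩ (hxq.trans hqx.symm)
    ?_ ?_ <;> rw [hqx]
  · simp only [IsIdempotentElem, add_mul, mul_add, single_mul_single_same,
      single_mul_single_of_ne, ne_eq, hij, hji, not_false_eq_true, mul_one]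
    abel
  · intro h
    simpa [single_apply_of_ne, hij, hji] using congr_fun₂ h i i

end Matrix

theorem matrix_not_uq (S : Type*) [Ring S] [Nontrivial S]
    (n : ℕ) (hn : 2 ≤ n) :
    ¬ IsUQRing (Matrix (Fin n) (Fin n) S) :=
  Matrix.not_isUQRing_of_ne (i := ⟨0, by omega⟩) (j := ⟨1, by omega⟩) (by simp)
end

section
/- Let R be a UQ ring and x ∈ R. Then x ∈ QN(R) if and only if x² ∈ QN(R). -/
/-! In a UQ ring, `q` is quasinilpotent iff `1 + q` is a unit, and `2` lies in the Jacobson radical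
(`-1 = 1 + (-2)` forces `-2` to be quasinilpotent). Since `(1 + x) ^ 2 = (1 + x ^ 2) + 2 * x`,
`1 + x` is a unit iff `1 + x ^ 2` is. -/

section

variable {R : Type*} [Ring R]

theorem IsQuasinilpotent.isUnit_one_add_s19 {a : R} (ha : IsQuasinilpotent a) : IsUnit (1 + a) := by
  simpa using ha (-1) (by simp)

theorem IsUnit.add_mul_of_forall_isUnit_one_add_mul {a u : R} (ha : ∀ z, IsUnit (1 + a * z))
    (hu : IsUnit u) (y : R) : IsUnit (u + a * y) := by
  obtain ⟨u, rfl⟩ := hu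
  have hfactor : (u : R) + a * y = (1 + a * (y * ↑u⁻¹)) * u := by
    simp only [add_mul, one_mul, mul_assoc, Units.inv_mul, mul_one]
  rw [hfactor]
  exact (ha _).mul u.isUnit

namespace IsUQRing

theorem isQuasinilpotent_iff_isUnit_one_add (hR : IsUQRing R) {a : R} :
    IsQuasinilpotent a ↔ IsUnit (1 + a) := by
  refine ⟨IsQuasinilpotent.isUnit_one_add_s19, fun h => ?_⟩
  obtain ⟨q, hq, hEq⟩ := (hR (1 + a)).mp h
  rwa [add_left_cancel hEq]

theorem isQuasinilpotent_neg_two (hR : IsUQRing R) : IsQuasinilpotent (-2 : R) := by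
  obtain ⟨q, hq, hEq⟩ := (hR (-1)).mp isUnit_one.neg
  have hq_eq : q = -2 := by
    rw [← sub_eq_iff_eq_add'.mpr hEq]
    norm_num
  rwa [← hq_eq]

theorem isUnit_one_add_two_mul (hR : IsUQRing R) (z : R) : IsUnit (1 + 2 * z) := by
  simpa using hR.isQuasinilpotent_neg_two z (Commute.ofNat_right z 2).neg_right.eq

end IsUQRing

end

theorem uq_qn_iff_sq_qn {R : Type*} [Ring R] (hR : IsUQRing R) (x : R) :
    IsQuasinilpotent x ↔ IsQuasinilpotent (x ^ 2) := by
  rw [hR.isQuasinilpotent_iff_isUnit_one_add, hR.isQuasinilpotent_iff_isUnit_one_add,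
    ← isUnit_pow_iff two_ne_zero]
  have htwo := hR.isUnit_one_add_two_mul
  constructor
  · intro h
    have hsq : 1 + x ^ 2 = (1 + x) ^ 2 + 2 * -x := by noncomm_ring
    exact hsq ▸ h.add_mul_of_forall_isUnit_one_add_mul htwo (-x)
  · intro h
    have hsq : (1 + x) ^ 2 = 1 + x ^ 2 + 2 * x := by noncomm_ring
    exact hsq ▸ h.add_mul_of_forall_isUnit_one_add_mul htwo x
end
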